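/- In every play of the graph game on (G, C, s, R), for each i = 1,…,n−1 the i-th move of the play goes from active vertex g_{i−1} to g_i, and this move is made by the ∃-player if i is odd and by the ∀-player if i is even. -/

import Mathlib

/-!
From `gₖ` the only edge leads to `aₖ₊₁`, and the vertices of `G(xₖ₊₁)` other than `gₖ₊₁` lie
outside `C ∪ R⁻¹(E)`, since `R` only relates the vertices `w_{i,j}`. Hence a move from `gₖ` runs
through `G(xₖ₊₁)` and must stop at `gₖ₊₁ ∈ C`. Such a move only deletes edges entering
`G(xₖ₊₁)`, so the path through each later component stays available and the player to move is
never stuck before `g_{n-1}`.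
-/

namespace PhutballQBF

/-- A literal: a variable `xₗ` (`pos l`) or its negation `¬xₗ` (`neg l`). -/
inductive Lit where
  | pos (l : ℕ)
  | neg (l : ℕ)
deriving DecidableEq

/-- The index of the variable occurring in a literal. -/
def Lit.var : Lit → ℕ
  | .pos l => l
  | .neg l => l

/-- Evaluation of a literal under a Boolean assignment. -/
def Lit.eval (σ : ℕ → Bool) : Lit → Bool
  | .pos l => σ l
  | .neg l => !(σ l)

/-- Well-formedness of the 3CNF `F = F₁ ∧ ⋯ ∧ F_m`: the literal `l_{i,j}` (for
`1 ≤ i ≤ m`, `1 ≤ j ≤ 3`) mentions one of the variables `x₁, …, xₙ`. -/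
def LitWF (n m : ℕ) (lit : ℕ → ℕ → Lit) : Prop :=
  ∀ i j, 1 ≤ i → i ≤ m → 1 ≤ j → j ≤ 3 → 1 ≤ (lit i j).var ∧ (lit i j).var ≤ n

/-- The clause `Fᵢ = (l_{i,1} ∨ l_{i,2} ∨ l_{i,3})` evaluates to true under `σ`. -/
def ClauseTrue (lit : ℕ → ℕ → Lit) (i : ℕ) (σ : ℕ → Bool) : Prop :=
  ∃ j, 1 ≤ j ∧ j ≤ 3 ∧ (lit i j).eval σ = true

/-- The 3CNF formula `F = F₁ ∧ ⋯ ∧ F_m` evaluates to true under `σ`. -/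
def FTrue (lit : ℕ → ℕ → Lit) (m : ℕ) (σ : ℕ → Bool) : Prop :=
  ∀ i, 1 ≤ i → i ≤ m → ClauseTrue lit i σ

/-- `QAux P i k σ`: the quantified statement with `k` variables `x_i, …, x_{i+k-1}`
still to be quantified (existentially when the index is odd, universally when even),
the remaining variables having the values recorded in `σ`. -/
def QAux (P : (ℕ → Bool) → Prop) : ℕ → ℕ → (ℕ → Bool) → Prop
  | _, 0, σ => P σ
  | i, k + 1, σ =>
      if i % 2 = 1 then ∃ b, QAux P (i + 1) k (Function.update σ i b)
      else ∀ b, QAux P (i + 1) k (Function.update σ i b)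

/-- Truth of the restricted quantified Boolean formula
`Q = ∃x₁ ∀x₂ ∃x₃ ⋯ ∀xₙ F(x₁, …, xₙ)`. -/
def QTrue (n m : ℕ) (lit : ℕ → ℕ → Lit) : Prop :=
  QAux (FTrue lit m) 1 n (fun _ => false)

/-- The vertices of the graph `G` built from `Q` (with natural-number indices;
`g 0` is the extra vertex `g₀`). -/
inductive Vtx where
  | a (i : ℕ) | b (i : ℕ) | c (i : ℕ) | d (i : ℕ) | e (i : ℕ) | f (i : ℕ) | g (i : ℕ)
  | x (i : ℕ) | y (i : ℕ) | z (i : ℕ) | w (i : ℕ) (j : ℕ)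
deriving DecidableEq

/-- A directed edge. -/
abbrev Edge := Vtx × Vtx

/-- The edge set `E(G)` of the graph `G` constructed from `Q` (with `n` variables and
`m` clauses): the variable components `G(xᵢ)`, the connecting edges `(gᵢ, aᵢ₊₁)` for
`i = 0, …, n-1`, the edge `(gₙ, x₁)`, and the formula component `G(F)`. -/
def EG (n m : ℕ) : Set Edge :=
  { p | (∃ i, 1 ≤ i ∧ i ≤ n ∧
          (p = (Vtx.a i, Vtx.b i) ∨ p = (Vtx.a i, Vtx.c i) ∨ p = (Vtx.b i, Vtx.e i) ∨
           p = (Vtx.c i, Vtx.f i) ∨ p = (Vtx.e i, Vtx.d i) ∨ p = (Vtx.f i, Vtx.d i) ∨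
           p = (Vtx.d i, Vtx.g i))) ∨
        (∃ i, i ≤ n - 1 ∧ p = (Vtx.g i, Vtx.a (i + 1))) ∨
        p = (Vtx.g n, Vtx.x 1) ∨
        (∃ i, 1 ≤ i ∧ i ≤ m ∧
          (p = (Vtx.x i, Vtx.y i) ∨ p = (Vtx.y i, Vtx.z i) ∨ p = (Vtx.z i, Vtx.w i 1) ∨
           p = (Vtx.w i 1, Vtx.w i 2) ∨ p = (Vtx.w i 2, Vtx.w i 3))) ∨
        (∃ i, 1 ≤ i ∧ i ≤ m - 1 ∧ p = (Vtx.x i, Vtx.x (i + 1))) }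

/-- The set `C = {g₀, g₁, …, g_{n-1}} ∪ {z₁, …, z_m}`. -/
def Cset (n m : ℕ) : Set Vtx :=
  { v | (∃ i, i ≤ n - 1 ∧ v = Vtx.g i) ∨ (∃ i, 1 ≤ i ∧ i ≤ m ∧ v = Vtx.z i) }

/-- The relation `R ⊆ V(G) × E(G)`: `(w_{i,j}, (bₗ, eₗ)) ∈ R` iff `l_{i,j} = xₗ`, and
`(w_{i,j}, (cₗ, fₗ)) ∈ R` iff `l_{i,j} = ¬xₗ`. -/
def Rrel (lit : ℕ → ℕ → Lit) (m : ℕ) : Set (Vtx × Edge) :=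
  { p | ∃ i j, 1 ≤ i ∧ i ≤ m ∧ 1 ≤ j ∧ j ≤ 3 ∧
        ((∃ l, lit i j = Lit.pos l ∧ p = (Vtx.w i j, (Vtx.b l, Vtx.e l))) ∨
         (∃ l, lit i j = Lit.neg l ∧ p = (Vtx.w i j, (Vtx.c l, Vtx.f l)))) }

/-- `Rinv R E = R⁻¹(E)`: the vertices pointing some edge of `E`. -/
def Rinv (R : Set (Vtx × Edge)) (E : Set Edge) : Set Vtx :=
  { v | ∃ e ∈ E, (v, e) ∈ R }

/-- The set of (directed) edges traversed by a path given as its list of vertices. -/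
def pathEdges (p : List Vtx) : Set Edge := { e | e ∈ p.zip p.tail }

/-- A legal move of the graph game from active vertex `u ∈ C` with current edge set `E`
along the directed path `p` (a list of at least two pairwise distinct vertices whose
consecutive pairs are edges of `E`), ending at a vertex `v ∈ C ∪ R⁻¹(E)`, with all
internal vertices of `p` outside `C ∪ R⁻¹(E)`; the resulting edge set `E'` is obtained
by deleting the edges of `p` from `E`. -/
def LegalMoveVia (C : Set Vtx) (R : Set (Vtx × Edge))
    (u : Vtx) (E : Set Edge) (v : Vtx) (E' : Set Edge) (p : List Vtx) : Prop :=
  u ∈ C ∧ v ∈ C ∪ Rinv R E ∧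
  2 ≤ p.length ∧ p.Nodup ∧
  p.head? = some u ∧ p.getLast? = some v ∧
  List.Chain' (fun a b => (a, b) ∈ E) p ∧
  (∀ w ∈ (p.drop 1).dropLast, w ∉ C ∪ Rinv R E) ∧
  E' = E \ pathEdges p

/-- A legal move from `(u, E)` to `(v, E')` (along some path). -/
def LegalMove (C : Set Vtx) (R : Set (Vtx × Edge))
    (u : Vtx) (E : Set Edge) (v : Vtx) (E' : Set Edge) : Prop :=
  ∃ p, LegalMoveVia C R u E v E' p

/-- `MoverWins C R true u E` says that the player to move at the position with active
vertex `u` and current edge set `E` has a winning strategy; `MoverWins C R false u E`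
says that the player to move loses whatever he does (in particular, if he has no legal
move he loses immediately; a move to a vertex of `R⁻¹(E)` wins the game for the mover). -/
inductive MoverWins (C : Set Vtx) (R : Set (Vtx × Edge)) : Bool → Vtx → Set Edge → Prop
  | winsNow {u E v E'} : LegalMove C R u E v E' → v ∈ Rinv R E →
      MoverWins C R true u E
  | winsLater {u E v E'} : LegalMove C R u E v E' → MoverWins C R false v E' →
      MoverWins C R true u E
  | loses {u E} :
      (∀ v E', LegalMove C R u E v E' → v ∉ Rinv R E) →
      (∀ v E', LegalMove C R u E v E' → MoverWins C R true v E') →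
      MoverWins C R false u E

/-- The two players of the graph game. -/
inductive Player where
  | ex | fa
deriving DecidableEq

/-- The opponent of a player. -/
def Player.other : Player → Player
  | .ex => .fa
  | .fa => .ex

/-- A (maximal) play of the graph game on `(G, C, s, R)` starting from active vertex `s`
and edge set `E0`, with the ∃-player moving first.  `act k` and `edg k` are the active
vertex and edge set after `k` moves, `turn k` is the player who makes the `(k+1)`-st
move, and `len` is the total number of moves.  The play stops either because its last
move reached a vertex of `R⁻¹(E)` (the mover wins) or because the player to move has no
legal move (he loses); before that, no move may end in `R⁻¹(E)` without stopping. -/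
structure Play (C : Set Vtx) (R : Set (Vtx × Edge)) (s : Vtx) (E0 : Set Edge) where
  len : ℕ
  act : ℕ → Vtx
  edg : ℕ → Set Edge
  turn : ℕ → Player
  init_act : act 0 = s
  init_edg : edg 0 = E0
  init_turn : turn 0 = Player.ex
  turn_alt : ∀ k, turn (k + 1) = (turn k).other
  step : ∀ k, k < len → LegalMove C R (act k) (edg k) (act (k + 1)) (edg (k + 1))
  not_over : ∀ k, k + 1 < len → act (k + 1) ∉ Rinv R (edg k)
  maximal : (0 < len ∧ act len ∈ Rinv R (edg (len - 1))) ∨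
            (∀ v E', ¬ LegalMove C R (act len) (edg len) v E')

def componentVertices (j : ℕ) : Set Vtx :=
  {Vtx.a j, Vtx.b j, Vtx.c j, Vtx.d j, Vtx.e j, Vtx.f j, Vtx.g j}

lemma eq_of_mem_componentVertices {j j' : ℕ} {v : Vtx} (h : v ∈ componentVertices j)
    (h' : v ∈ componentVertices j') : j = j' := by
  simp only [componentVertices, Set.mem_insert_iff, Set.mem_singleton_iff] at h h'
  rcases h with rfl | rfl | rfl | rfl | rfl | rfl | rfl <;> simpa using h'.symm

lemma g_mem_Cset {n m k : ℕ} (hk : k ≤ n - 1) : Vtx.g k ∈ Cset n m :=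
  Or.inl ⟨k, hk, rfl⟩

lemma exists_eq_w_of_mem_Rinv {lit : ℕ → ℕ → Lit} {m : ℕ} {E : Set Edge} {v : Vtx}
    (h : v ∈ Rinv (Rrel lit m) E) : ∃ i j, v = Vtx.w i j := by
  obtain ⟨e, -, i, j, -, -, -, -, ⟨l, -, hp⟩ | ⟨l, -, hp⟩⟩ := h <;>
    exact ⟨i, j, congrArg Prod.fst hp⟩

lemma not_mem_Cset_union_Rinv {n m j : ℕ} {lit : ℕ → ℕ → Lit} {E : Set Edge} {v : Vtx}
    (hv : v ∈ componentVertices j) (hg : v ≠ Vtx.g j) :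
    v ∉ Cset n m ∪ Rinv (Rrel lit m) E := by
  rintro ((⟨i, -, rfl⟩ | ⟨i, -, -, rfl⟩) | hR)
  · simp_all [componentVertices]
  · simp [componentVertices] at hv
  · obtain ⟨i, i', rfl⟩ := exists_eq_w_of_mem_Rinv hR
    simp [componentVertices] at hv

lemma eq_a_of_g_edge {n m k : ℕ} (hk : k < n) {v : Vtx} (h : (Vtx.g k, v) ∈ EG n m) :
    v = Vtx.a (k + 1) := by
  rcases h with ⟨i, -, -, h⟩ | ⟨i, -, h⟩ | h | ⟨i, -, -, h⟩ | ⟨i, -, -, h⟩ <;>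
    simp_all [Prod.ext_iff]

lemma mem_componentVertices_of_edge {n m j : ℕ} {v w : Vtx} (hv : v ∈ componentVertices j)
    (hg : v ≠ Vtx.g j) (h : (v, w) ∈ EG n m) : w ∈ componentVertices j := by
  simp only [componentVertices, Set.mem_insert_iff, Set.mem_singleton_iff] at hv ⊢
  rcases hv with rfl | rfl | rfl | rfl | rfl | rfl | rfl <;>
  rcases h with ⟨i, -, -, h⟩ | ⟨i, -, h⟩ | h | ⟨i, -, -, h⟩ | ⟨i, -, -, h⟩ <;>
    grind

theorem _root_.List.IsChain.forall_mem_of_closed {α : Type*} {r : α → α → Prop} {S T : Set α}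
    (hT : ∀ x ∈ T, x ∉ S → ∀ y, r x y → y ∈ T) {l : List α} (hl : l.IsChain r)
    (hhead : ∀ x ∈ l.head?, x ∈ T) (hint : ∀ x ∈ l.dropLast, x ∉ S) : ∀ x ∈ l, x ∈ T := by
  induction hl with
  | nil => simp
  | singleton a => simpa using hhead
  | @cons_cons a b l hab _ ih =>
    have ha : a ∈ T := hhead a rfl
    have hb : b ∈ T := hT a ha (hint a (by simp)) b hab
    have ih := ih (by simpa using hb) fun x hx => hint x (by simp [hx])
    simpa [ha] using ih

lemma legalMoveVia_from_g {n m k : ℕ} {lit : ℕ → ℕ → Lit} (hk : k + 1 ≤ n - 1)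
    {E E' : Set Edge} (hE : E ⊆ EG n m) {v : Vtx} {p : List Vtx}
    (h : LegalMoveVia (Cset n m) (Rrel lit m) (Vtx.g k) E v E' p) :
    v = Vtx.g (k + 1) ∧ ∀ e ∈ pathEdges p, e.2 ∈ componentVertices (k + 1) := by
  obtain ⟨-, hv, hlen, -, hhead, hlast, hchain, hint, -⟩ := h
  obtain ⟨x, q, rfl⟩ : ∃ x q, p = Vtx.g k :: x :: q := by
    match p, hlen with
    | u :: x :: q, _ => exact ⟨x, q, by simpa using hhead⟩
  have hchain : (Vtx.g k :: x :: q).IsChain (fun a b => (a, b) ∈ E) := hchain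
  have hmem : ∀ y ∈ x :: q, y ∈ componentVertices (k + 1) := by
    refine hchain.tail.forall_mem_of_closed (S := Cset n m ∪ Rinv (Rrel lit m) E)
      (fun y hy hyS z hyz => ?_) ?_ (by simpa using hint)
    · refine mem_componentVertices_of_edge hy (fun hyg => hyS ?_) (hE hyz)
      exact hyg ▸ Or.inl (g_mem_Cset hk)
    · rw [eq_a_of_g_edge (by omega) (hE (List.isChain_cons_cons.mp hchain).1)]
      simp [componentVertices]
  have hvq : v ∈ x :: q := List.mem_of_getLast? (by simpa using hlast)
  refine ⟨by_contra fun hne => not_mem_Cset_union_Rinv (hmem v hvq) hne hv, ?_⟩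
  rintro ⟨y, z⟩ he
  exact hmem z (List.of_mem_zip he).2

/-- The invariant of the opening: so far only edges entering `G(x₁), …, G(xₖ)` were deleted. -/
def IntactBeyond (n m k : ℕ) (E : Set Edge) : Prop :=
  E ⊆ EG n m ∧ ∀ e ∈ EG n m, ∀ j, k < j → e.2 ∈ componentVertices j → e ∈ E

lemma IntactBeyond.exists_legalMove {n m k : ℕ} {lit : ℕ → ℕ → Lit} {E : Set Edge}
    (hE : IntactBeyond n m k E) (hk : k + 1 ≤ n - 1) :
    ∃ E', LegalMove (Cset n m) (Rrel lit m) (Vtx.g k) E (Vtx.g (k + 1)) E' := by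
  have hedge : ∀ e ∈ EG n m, e.2 ∈ componentVertices (k + 1) → e ∈ E :=
    fun e he hc => hE.2 e he (k + 1) (Nat.lt_succ_self k) hc
  refine ⟨_, [Vtx.g k, Vtx.a (k + 1), Vtx.b (k + 1), Vtx.e (k + 1), Vtx.d (k + 1),
    Vtx.g (k + 1)], g_mem_Cset (by omega), Or.inl (g_mem_Cset hk), by simp, by simp, rfl,
    by simp, ?_, ?_, rfl⟩
  · show List.IsChain _ _
    simp only [List.isChain_cons_cons, List.isChain_singleton, and_true]
    refine ⟨?_, ?_, ?_, ?_, ?_⟩ <;> refine hedge _ ?_ (by simp [componentVertices])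
    · exact Or.inr (Or.inl ⟨k, by omega, rfl⟩)
    all_goals exact Or.inl ⟨k + 1, by omega, by omega, by simp⟩
  · simp only [List.drop_one, List.tail_cons, List.dropLast_cons_cons, List.dropLast_singleton,
      List.mem_cons, List.not_mem_nil, or_false]
    rintro y (rfl | rfl | rfl | rfl) <;>
      exact not_mem_Cset_union_Rinv (j := k + 1) (by simp [componentVertices]) (by simp)

lemma IntactBeyond.legalMoveVia {n m k : ℕ} {lit : ℕ → ℕ → Lit} {E E' : Set Edge}
    (hE : IntactBeyond n m k E) (hk : k + 1 ≤ n - 1) {v : Vtx} {p : List Vtx}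
    (h : LegalMoveVia (Cset n m) (Rrel lit m) (Vtx.g k) E v E' p) :
    v = Vtx.g (k + 1) ∧ IntactBeyond n m (k + 1) E' := by
  obtain ⟨hv, hpath⟩ := legalMoveVia_from_g hk hE.1 h
  have hE' : E' = E \ pathEdges p := h.2.2.2.2.2.2.2.2
  refine ⟨hv, hE' ▸ Set.sdiff_subset.trans hE.1, fun e he j hj hc => hE' ▸ ⟨?_, fun hep => ?_⟩⟩
  · exact hE.2 e he j (by omega) hc
  · have := eq_of_mem_componentVertices (hpath e hep) hc
    omega

lemma Play.turn_eq {C : Set Vtx} {R : Set (Vtx × Edge)} {s : Vtx} {E0 : Set Edge}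
    (P : Play C R s E0) (k : ℕ) : P.turn k = if Even k then Player.ex else Player.fa := by
  induction k with
  | zero => simpa using P.init_turn
  | succ k ih =>
    by_cases h : Even k <;> simp [P.turn_alt, ih, h, Nat.even_add_one, Player.other]

lemma Play.opening_invariant {n m : ℕ} {lit : ℕ → ℕ → Lit}
    (P : Play (Cset n m) (Rrel lit m) (Vtx.g 0) (EG n m)) {k : ℕ} (hk : k ≤ n - 1) :
    k ≤ P.len ∧ P.act k = Vtx.g k ∧ IntactBeyond n m k (P.edg k) := by
  induction k with
  | zero =>
    refine ⟨Nat.zero_le _, P.init_act, ?_⟩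
    rw [P.init_edg]
    exact ⟨subset_rfl, fun e he _ _ _ => he⟩
  | succ k ih =>
    obtain ⟨hlen, hact, hE⟩ := ih (by omega)
    have hlt : k < P.len := by
      refine lt_of_le_of_ne hlen fun hkl => ?_
      rcases P.maximal with ⟨-, hwin⟩ | hstuck
      · rw [← hkl, hact] at hwin
        obtain ⟨i, j, h⟩ := exists_eq_w_of_mem_Rinv hwin
        cases h
      · rw [← hkl, hact] at hstuck
        obtain ⟨E', hmove⟩ := hE.exists_legalMove (lit := lit) hk
        exact hstuck _ _ hmove
    obtain ⟨p, hp⟩ := P.step k hlt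
    rw [hact] at hp
    obtain ⟨hv, hE'⟩ := hE.legalMoveVia hk hp
    exact ⟨hlt, hv, hE'⟩

theorem ith_move_traverses_variable_component_general
    (n m : ℕ)
    (lit : ℕ → ℕ → Lit)
    (P : Play (Cset n m) (Rrel lit m) (Vtx.g 0) (EG n m))
    (i : ℕ) (hi1 : 1 ≤ i) (hi2 : i ≤ n - 1) :
    i ≤ P.len ∧ P.act (i - 1) = Vtx.g (i - 1) ∧ P.act i = Vtx.g i ∧
    ((Odd i → P.turn (i - 1) = Player.ex) ∧ (Even i → P.turn (i - 1) = Player.fa)) := by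
  obtain ⟨hlen, hact, -⟩ := P.opening_invariant hi2
  obtain ⟨-, hprev, -⟩ := P.opening_invariant (k := i - 1) (by omega)
  refine ⟨hlen, hprev, hact, fun hodd => ?_, fun heven => ?_⟩
  · simp [P.turn_eq, Nat.even_sub hi1, Nat.not_even_iff_odd.mpr hodd]
  · simp [P.turn_eq, Nat.even_sub hi1, heven]

/-- In every play of the graph game on `(G, C, s, R)`, for each
`i = 1, …, n-1` the `i`-th move of the play goes from active vertex `g_{i-1}` to `gᵢ`,
and this move is made by the ∃-player if `i` is odd and by the ∀-player if `i` is
even. -/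
theorem ith_move_traverses_variable_component
    (n m : ℕ) (hn : Even n) (hn2 : 2 ≤ n) (hm : 1 ≤ m)
    (lit : ℕ → ℕ → Lit) (hwf : LitWF n m lit)
    (P : Play (Cset n m) (Rrel lit m) (Vtx.g 0) (EG n m))
    (i : ℕ) (hi1 : 1 ≤ i) (hi2 : i ≤ n - 1) :
    i ≤ P.len ∧ P.act (i - 1) = Vtx.g (i - 1) ∧ P.act i = Vtx.g i ∧
    ((Odd i → P.turn (i - 1) = Player.ex) ∧ (Even i → P.turn (i - 1) = Player.fa)) :=
  ith_move_traverses_variable_component_general n m lit P i hi1 hi2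

end PhutballQBF
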